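/- arXiv:1610.08539 — 9 statements merged into one kernel-verified Lean document; each statement's English description precedes it below -/
import Mathlib

section
/- Let ω, c ∈ ℝ and ζ ∈ ℂ. Let R, θ : ℝ → ℝ be twice continuously differentiable with R(x) > 0 and θ'(x) = c/R(x)² for all x, set φ(x) = R(x)e^{iθ(x)}, and assume φ satisfies the stationary focusing NLS equation ωφ = −(1/2)φ'' − |φ|²φ. Set A(x) = −iζ² + (i/2)|φ(x)|² + (i/2)ω, B(x) = ζφ(x) + (i/2)φ'(x), C(x) = −ζ·conj(φ(x)) + (i/2)·conj(φ)'(x). Let χ = (χ₁, χ₂) : ℝ × ℝ → ℂ² be twice continuously differentiable and satisfy the Lax pair ∂ₓχ₁ = −iζχ₁ + φχ₂, ∂ₓχ₂ = −conj(φ)χ₁ + iζχ₂, ∂ₜχ₁ = Aχ₁ + Bχ₂, ∂ₜχ₂ = Cχ₁ − Aχ₂. Then the functions u(x,t) = e^{−iθ(x)}χ₁(x,t)² − e^{iθ(x)}χ₂(x,t)² and v(x,t) = −i e^{−iθ(x)}χ₁(x,t)² − i e^{iθ(x)}χ₂(x,t)² satisfy the linearized focusing NLS system ∂ₜu = −S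 u + L₋ v and ∂ₜv = −L₊ u − S v, where (L₋ w)(x) = −(1/2)∂ₓ²w − R(x)²w − ωw + (c²/(2R(x)⁴))w, (L₊ w)(x) = −(1/2)∂ₓ²w − 3R(x)²w − ωw + (c²/(2R(x)⁴))w, and (S w)(x) = (c/R(x)²)∂ₓw − (cR'(x)/R(x)³)w. -/
/-!
Write `u = P - Q` and `v = -i (P + Q)` with `P = e^{-iθ} χ₁²` and `Q = e^{iθ} χ₂²`.
Differentiating the spatial Lax equation twice and comparing with the temporal one shows that
`χ₁²` and `χ₂²` solve the linearization of NLS about `e^{-iωt} φ` in the original variables,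
`∂ₜ(χ₁²) = i (½ ∂ₓ²(χ₁²) + (2|φ|² + ω) χ₁² - φ² χ₂²)`, and the mirror equation for `χ₂²`
(the Lax pair is symmetric under `χ₁ ↔ χ₂`, `ζ ↦ -ζ`, `φ ↔ -φ̄`). Because `θ' = c / R²`,
conjugation by `e^{isθ}` (`s = ±1`) turns `S - i s L₋` into `i s (½ ∂ₓ² + R² + ω)`; together with
`L₊ = L₋ - 2R²`, the system for `(u, v)` is the sum and difference of the equations for `P` and `Q`.
-/

open Complex ComplexConjugate

noncomputable section

def linOpS (c : ℝ) (R : ℝ → ℝ) (f : ℝ → ℂ) (x : ℝ) : ℂ :=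
  ((c / R x ^ 2 : ℝ) : ℂ) * deriv f x - ((c * deriv R x / R x ^ 3 : ℝ) : ℂ) * f x

def linOpLMinus (ω c : ℝ) (R : ℝ → ℝ) (f : ℝ → ℂ) (x : ℝ) : ℂ :=
  -(1 / 2) * deriv (deriv f) x - ((R x : ℝ) : ℂ) ^ 2 * f x - (ω : ℂ) * f x
    + ((c ^ 2 / (2 * R x ^ 4) : ℝ) : ℂ) * f x

def linOpLPlus (ω c : ℝ) (R : ℝ → ℝ) (f : ℝ → ℂ) (x : ℝ) : ℂ :=
  -(1 / 2) * deriv (deriv f) x - 3 * ((R x : ℝ) : ℂ) ^ 2 * f x - (ω : ℂ) * f x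
    + ((c ^ 2 / (2 * R x ^ 4) : ℝ) : ℂ) * f x

end

section LinearOperators

variable {ω c : ℝ} {R : ℝ → ℝ} {f g : ℝ → ℂ} {x : ℝ}

lemma linOpLPlus_eq_linOpLMinus_sub :
    linOpLPlus ω c R f x = linOpLMinus ω c R f x - 2 * ((R x : ℝ) : ℂ) ^ 2 * f x := by
  unfold linOpLPlus linOpLMinus
  ring

lemma deriv_linear_comb (a b : ℂ) (hf : DifferentiableAt ℝ f x) (hg : DifferentiableAt ℝ g x) :
    deriv (fun y => a * f y + b * g y) x = a * deriv f x + b * deriv g x :=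
  ((hf.hasDerivAt.const_mul a).add (hg.hasDerivAt.const_mul b)).deriv

lemma linOpS_linear_comb (a b : ℂ) (hf : DifferentiableAt ℝ f x) (hg : DifferentiableAt ℝ g x) :
    linOpS c R (fun y => a * f y + b * g y) x = a * linOpS c R f x + b * linOpS c R g x := by
  unfold linOpS
  rw [deriv_linear_comb a b hf hg]
  ring

lemma linOpLMinus_linear_comb (a b : ℂ) (hf : Differentiable ℝ f) (hg : Differentiable ℝ g)
    (hf' : DifferentiableAt ℝ (deriv f) x) (hg' : DifferentiableAt ℝ (deriv g) x) :
    linOpLMinus ω c R (fun y => a * f y + b * g y) x =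
      a * linOpLMinus ω c R f x + b * linOpLMinus ω c R g x := by
  have hderiv : deriv (fun y => a * f y + b * g y) = fun y => a * deriv f y + b * deriv g y :=
    funext fun y => deriv_linear_comb a b (hf y) (hg y)
  unfold linOpLMinus
  rw [hderiv, deriv_linear_comb a b hf' hg']
  ring

end LinearOperators

lemma hasDerivAt_div_sq {R : ℝ → ℝ} {x c : ℝ} (hR : DifferentiableAt ℝ R x) (hRx : R x ≠ 0) :
    HasDerivAt (fun y => c / R y ^ 2) (-2 * (c * deriv R x / R x ^ 3)) x := by
  refine ((hasDerivAt_const x c).div (hR.hasDerivAt.pow 2) (pow_ne_zero 2 hRx)).congr_deriv ?_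
  simp only [Pi.pow_apply]
  field_simp
  ring

section Gauge

variable {α α' w : ℝ → ℂ} {x : ℝ}

lemma deriv_cexp_mul (hα : ∀ y, HasDerivAt α (α' y) y) (hw : Differentiable ℝ w) :
    deriv (fun y => cexp (α y) * w y) = fun y => cexp (α y) * (α' y * w y + deriv w y) :=
  funext fun y => ((hα y).cexp.mul (hw y).hasDerivAt).deriv.trans (by ring)

lemma differentiableAt_deriv_cexp_mul (hα : ∀ y, HasDerivAt α (α' y) y)
    (hα' : DifferentiableAt ℝ α' x) (hw : Differentiable ℝ w)
    (hw' : DifferentiableAt ℝ (deriv w) x) :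
    DifferentiableAt ℝ (deriv fun y => cexp (α y) * w y) x := by
  rw [deriv_cexp_mul hα hw]
  exact (hα x).differentiableAt.cexp.mul ((hα'.mul (hw x)).add hw')

theorem linOpS_sub_linOpLMinus_gauge {ω c : ℝ} {R : ℝ → ℝ} (s : ℂ)
    (hs : s ^ 2 = 1) (hR : DifferentiableAt ℝ R x) (hRx : R x ≠ 0)
    (hα : ∀ y, HasDerivAt α (I * s * ((c / R y ^ 2 : ℝ) : ℂ)) y)
    (hw : Differentiable ℝ w) (hw' : DifferentiableAt ℝ (deriv w) x) :
    linOpS c R (fun y => cexp (α y) * w y) x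
        - I * s * linOpLMinus ω c R (fun y => cexp (α y) * w y) x =
      cexp (α x) * (I * s * (1 / 2 * deriv (deriv w) x + (((R x : ℝ) : ℂ) ^ 2 + ω) * w x)) := by
  have hderiv := deriv_cexp_mul hα hw
  have hderiv2 : deriv (deriv fun y => cexp (α y) * w y) x =
      cexp (α x) * (I * s * ((c / R x ^ 2 : ℝ) : ℂ))
          * (I * s * ((c / R x ^ 2 : ℝ) : ℂ) * w x + deriv w x)
        + cexp (α x) * (I * s * (((-2 * (c * deriv R x / R x ^ 3) : ℝ) : ℂ) * w x
          + ((c / R x ^ 2 : ℝ) : ℂ) * deriv w x) + deriv (deriv w) x) := by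
    rw [hderiv]
    exact ((hα x).cexp.fun_mul ((((hasDerivAt_div_sq hR hRx).ofReal_comp.const_mul (I * s)).fun_mul
        (hw x).hasDerivAt).fun_add hw'.hasDerivAt)).deriv.trans (by ring)
  unfold linOpS linOpLMinus
  rw [hderiv2, hderiv]
  push_cast
  linear_combination cexp (α x) * (-(c / R x ^ 2 : ℂ) * deriv w x
    + (c * deriv R x / R x ^ 3 : ℂ) * w x - I * s / 2 * (c / R x ^ 2 : ℂ) ^ 2 * w x) * hs
    + cexp (α x) * s ^ 2 * ((c / R x ^ 2 : ℂ) * deriv w x - (c * deriv R x / R x ^ 3 : ℂ) * w x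
      + I * s / 2 * (c / R x ^ 2 : ℂ) ^ 2 * w x) * I_sq

end Gauge

section SquaredEigenfunctions

variable {f₁ f₂ q r : ℝ → ℂ} {ζ : ℂ}

lemma deriv_sq_of_akns (hf₁ : ∀ y, HasDerivAt f₁ (-I * ζ * f₁ y + q y * f₂ y) y) :
    deriv (fun y => f₁ y ^ 2) = fun y => 2 * f₁ y * (-I * ζ * f₁ y + q y * f₂ y) :=
  funext fun y => ((hf₁ y).pow 2).deriv.trans (by ring)

lemma akns_swap (hf₁ : ∀ y, HasDerivAt f₁ (-I * ζ * f₁ y + q y * f₂ y) y)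
    (hf₂ : ∀ y, HasDerivAt f₂ (r y * f₁ y + I * ζ * f₂ y) y) :
    (∀ y, HasDerivAt f₂ (-I * -ζ * f₂ y + r y * f₁ y) y) ∧
      ∀ y, HasDerivAt f₁ (q y * f₂ y + I * -ζ * f₁ y) y :=
  ⟨fun y => (hf₂ y).congr_deriv (by ring), fun y => (hf₁ y).congr_deriv (by ring)⟩

lemma hasDerivAt_deriv_sq_of_akns {q' : ℂ} {x : ℝ}
    (hf₁ : ∀ y, HasDerivAt f₁ (-I * ζ * f₁ y + q y * f₂ y) y)
    (hf₂ : ∀ y, HasDerivAt f₂ (r y * f₁ y + I * ζ * f₂ y) y) (hq : HasDerivAt q q' x) :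
    HasDerivAt (deriv fun y => f₁ y ^ 2)
      (2 * (-I * ζ * f₁ x + q x * f₂ x) ^ 2 + 2 * f₁ x * (-I * ζ * (-I * ζ * f₁ x + q x * f₂ x)
        + (q' * f₂ x + q x * (r x * f₁ x + I * ζ * f₂ x)))) x := by
  rw [deriv_sq_of_akns hf₁]
  exact (((hf₁ x).const_mul 2).fun_mul
    (((hf₁ x).const_mul (-I * ζ)).fun_add (hq.fun_mul (hf₂ x)))).congr_deriv (by ring)

lemma differentiableAt_deriv_sq_of_akns {x : ℝ}
    (hf₁ : ∀ y, HasDerivAt f₁ (-I * ζ * f₁ y + q y * f₂ y) y)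
    (hf₂ : ∀ y, HasDerivAt f₂ (r y * f₁ y + I * ζ * f₂ y) y)
    (hq : DifferentiableAt ℝ q x) (hr : DifferentiableAt ℝ r x) :
    DifferentiableAt ℝ (deriv fun y => f₁ y ^ 2) x ∧
      DifferentiableAt ℝ (deriv fun y => f₂ y ^ 2) x :=
  ⟨(hasDerivAt_deriv_sq_of_akns hf₁ hf₂ hq.hasDerivAt).differentiableAt,
    (hasDerivAt_deriv_sq_of_akns (akns_swap hf₁ hf₂).1 (akns_swap hf₁ hf₂).2
      hr.hasDerivAt).differentiableAt⟩

theorem akns_sq_linearized {ω q' : ℂ} {x : ℝ}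
    (hf₁ : ∀ y, HasDerivAt f₁ (-I * ζ * f₁ y + q y * f₂ y) y)
    (hf₂ : ∀ y, HasDerivAt f₂ (r y * f₁ y + I * ζ * f₂ y) y) (hq : HasDerivAt q q' x) :
    2 * f₁ x * ((-I * ζ ^ 2 - I / 2 * (q x * r x) + I / 2 * ω) * f₁ x
        + (ζ * q x + I / 2 * q') * f₂ x) =
      I * (1 / 2 * deriv (deriv fun y => f₁ y ^ 2) x - 2 * (q x * r x) * f₁ x ^ 2
        + ω * f₁ x ^ 2 - q x ^ 2 * f₂ x ^ 2) := by
  rw [(hasDerivAt_deriv_sq_of_akns hf₁ hf₂ hq).deriv]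
  linear_combination (2 * ζ * q x * f₁ x * f₂ x - 2 * I * ζ ^ 2 * f₁ x ^ 2) * I_sq

end SquaredEigenfunctions

theorem focusing_sq_hasDerivAt_time {χ₁ χ₂ : ℝ × ℝ → ℂ} {φ : ℝ → ℂ} {ζ A B C : ℂ}
    {ω r ϑ x t : ℝ}
    (hf₁ : ∀ y, HasDerivAt (fun y => χ₁ (y, t)) (-I * ζ * χ₁ (y, t) + φ y * χ₂ (y, t)) y)
    (hf₂ : ∀ y, HasDerivAt (fun y => χ₂ (y, t)) (-conj (φ y) * χ₁ (y, t) + I * ζ * χ₂ (y, t)) y)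
    (hφ : DifferentiableAt ℝ φ x) (hφx : φ x = r * cexp (I * ϑ)) (hr : 0 ≤ r)
    (hA : A = -I * ζ ^ 2 + I / 2 * ((‖φ x‖ : ℝ) : ℂ) ^ 2 + I / 2 * ω)
    (hB : B = ζ * φ x + I / 2 * deriv φ x)
    (hC : C = -ζ * conj (φ x) + I / 2 * deriv (fun y => conj (φ y)) x)
    (ht₁ : HasDerivAt (fun t' => χ₁ (x, t')) (A * χ₁ (x, t) + B * χ₂ (x, t)) t)
    (ht₂ : HasDerivAt (fun t' => χ₂ (x, t')) (C * χ₁ (x, t) - A * χ₂ (x, t)) t) :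
    HasDerivAt (fun t' => χ₁ (x, t') ^ 2)
        (I * (1 / 2 * deriv (deriv fun y => χ₁ (y, t) ^ 2) x
          + (2 * (r : ℂ) ^ 2 + ω) * χ₁ (x, t) ^ 2
          - (r : ℂ) ^ 2 * cexp (I * ϑ) ^ 2 * χ₂ (x, t) ^ 2)) t ∧
      HasDerivAt (fun t' => χ₂ (x, t') ^ 2)
        (-I * (1 / 2 * deriv (deriv fun y => χ₂ (y, t) ^ 2) x
          + (2 * (r : ℂ) ^ 2 + ω) * χ₂ (x, t) ^ 2
          - (r : ℂ) ^ 2 * cexp (-I * ϑ) ^ 2 * χ₁ (x, t) ^ 2)) t := by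
  have hφc : HasDerivAt (fun y => conj (φ y)) (conj (deriv φ x)) x := hφ.hasDerivAt.star
  have hconj : conj (φ x) = r * cexp (-I * ϑ) := by
    rw [hφx, map_mul, conj_ofReal, ← exp_conj, map_mul, conj_I, conj_ofReal, neg_mul]
  have hnorm : ‖φ x‖ = r := by
    rw [hφx, norm_mul, norm_exp_I_mul_ofReal, mul_one, norm_real, Real.norm_of_nonneg hr]
  have hmul : φ x * conj (φ x) = (r : ℂ) ^ 2 := by rw [mul_conj', hnorm]
  have hw₁ := akns_sq_linearized (ω := ω) (r := fun y => -conj (φ y)) hf₁ hf₂ hφ.hasDerivAt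
  have hswap := akns_swap (r := fun y => -conj (φ y)) hf₁ hf₂
  have hw₂ := akns_sq_linearized (ω := ω) hswap.1 hswap.2 hφc.neg
  constructor
  · refine (ht₁.pow 2).congr_deriv ?_
    rw [hA, hB, hnorm]
    linear_combination hw₁ + I * χ₁ (x, t) ^ 2 * hmul
      - I * χ₂ (x, t) ^ 2 * (φ x + r * cexp (I * ϑ)) * hφx
  · refine (ht₂.pow 2).congr_deriv ?_
    rw [hA, hC, hnorm, hφc.deriv]
    linear_combination -hw₂ - I * χ₂ (x, t) ^ 2 * hmul
      + I * χ₁ (x, t) ^ 2 * (conj (φ x) + r * cexp (-I * ϑ)) * hconj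

theorem linearized_system_of_gauged_sq {ω c : ℝ} {R θ : ℝ → ℝ} {w₁ w₂ : ℝ → ℂ} {x : ℝ}
    {w₁t w₂t : ℂ} (hR : DifferentiableAt ℝ R x) (hRx : R x ≠ 0)
    (hθ : ∀ y, HasDerivAt θ (c / R y ^ 2) y)
    (hw₁ : Differentiable ℝ w₁) (hw₁' : DifferentiableAt ℝ (deriv w₁) x)
    (hw₂ : Differentiable ℝ w₂) (hw₂' : DifferentiableAt ℝ (deriv w₂) x)
    (hw₁t : w₁t = I * (1 / 2 * deriv (deriv w₁) x + (2 * ((R x : ℝ) : ℂ) ^ 2 + ω) * w₁ x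
      - ((R x : ℝ) : ℂ) ^ 2 * cexp (I * θ x) ^ 2 * w₂ x))
    (hw₂t : w₂t = -I * (1 / 2 * deriv (deriv w₂) x + (2 * ((R x : ℝ) : ℂ) ^ 2 + ω) * w₂ x
      - ((R x : ℝ) : ℂ) ^ 2 * cexp (-I * θ x) ^ 2 * w₁ x)) :
    cexp (-I * θ x) * w₁t - cexp (I * θ x) * w₂t =
        -linOpS c R (fun y => cexp (-I * θ y) * w₁ y - cexp (I * θ y) * w₂ y) x
          + linOpLMinus ω c R (fun y => -I * cexp (-I * θ y) * w₁ y - I * cexp (I * θ y) * w₂ y) x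
      ∧ -I * cexp (-I * θ x) * w₁t - I * cexp (I * θ x) * w₂t =
        -linOpLPlus ω c R (fun y => cexp (-I * θ y) * w₁ y - cexp (I * θ y) * w₂ y) x
          - linOpS c R (fun y => -I * cexp (-I * θ y) * w₁ y - I * cexp (I * θ y) * w₂ y) x := by
  have hα₁ : ∀ y, HasDerivAt (fun y => -I * (θ y : ℂ)) (I * (-1) * ((c / R y ^ 2 : ℝ) : ℂ)) y :=
    fun y => ((hθ y).ofReal_comp.const_mul (-I)).congr_deriv (by ring)
  have hα₂ : ∀ y, HasDerivAt (fun y => I * (θ y : ℂ)) (I * 1 * ((c / R y ^ 2 : ℝ) : ℂ)) y :=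
    fun y => ((hθ y).ofReal_comp.const_mul I).congr_deriv (by ring)
  have hα' (s : ℂ) : DifferentiableAt ℝ (fun y => I * s * ((c / R y ^ 2 : ℝ) : ℂ)) x :=
    ((hasDerivAt_div_sq hR hRx).ofReal_comp.differentiableAt).const_mul (I * s)
  have hP := linOpS_sub_linOpLMinus_gauge (ω := ω) (-1) (by norm_num) hR hRx hα₁ hw₁ hw₁'
  have hQ := linOpS_sub_linOpLMinus_gauge (ω := ω) 1 (by norm_num) hR hRx hα₂ hw₂ hw₂'
  have hPd : Differentiable ℝ fun y => cexp (-I * θ y) * w₁ y :=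
    fun y => (hα₁ y).differentiableAt.cexp.mul (hw₁ y)
  have hQd : Differentiable ℝ fun y => cexp (I * θ y) * w₂ y :=
    fun y => (hα₂ y).differentiableAt.cexp.mul (hw₂ y)
  have hPd' := differentiableAt_deriv_cexp_mul hα₁ (hα' (-1)) hw₁ hw₁'
  have hQd' := differentiableAt_deriv_cexp_mul hα₂ (hα' 1) hw₂ hw₂'
  have hU : (fun y => cexp (-I * θ y) * w₁ y - cexp (I * θ y) * w₂ y) =
      fun y => 1 * (cexp (-I * θ y) * w₁ y) + (-1) * (cexp (I * θ y) * w₂ y) :=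
    funext fun y => by ring
  have hV : (fun y => -I * cexp (-I * θ y) * w₁ y - I * cexp (I * θ y) * w₂ y) =
      fun y => (-I) * (cexp (-I * θ y) * w₁ y) + (-I) * (cexp (I * θ y) * w₂ y) :=
    funext fun y => by ring
  have hE : cexp (-I * θ x) * cexp (I * θ x) = 1 := by
    rw [← exp_add, neg_mul, neg_add_cancel, exp_zero]
  rw [linOpLPlus_eq_linOpLMinus_sub, hU, hV, linOpS_linear_comb _ _ (hPd x) (hQd x),
    linOpS_linear_comb _ _ (hPd x) (hQd x), linOpLMinus_linear_comb _ _ hPd hQd hPd' hQd',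
    linOpLMinus_linear_comb _ _ hPd hQd hPd' hQd']
  constructor
  · linear_combination hP - hQ + cexp (-I * θ x) * hw₁t - cexp (I * θ x) * hw₂t
      - I * (R x : ℂ) ^ 2 * (cexp (-I * θ x) * w₁ x + cexp (I * θ x) * w₂ x) * hE
  · linear_combination -I * hP - I * hQ - I * cexp (-I * θ x) * hw₁t - I * cexp (I * θ x) * hw₂t
      - (R x : ℂ) ^ 2 * (cexp (I * θ x) * w₂ x - cexp (-I * θ x) * w₁ x) * hE
      + (linOpLMinus ω c R (fun y => cexp (-I * θ y) * w₁ y) x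
        - linOpLMinus ω c R (fun y => cexp (I * θ y) * w₂ y) x
        + (R x : ℂ) ^ 2 * (cexp (-I * θ x) * cexp (I * θ x) + 1)
          * (cexp (I * θ x) * w₂ x - cexp (-I * θ x) * w₁ x)) * I_sq

theorem squared_eigenfunction_connection_general
    (ω c : ℝ) (ζ : ℂ) (R θ : ℝ → ℝ)
    (hR : ContDiff ℝ 2 R) (hθ : ContDiff ℝ 2 θ)
    (hRpos : ∀ x : ℝ, 0 < R x)
    (hθ' : ∀ x : ℝ, deriv θ x = c / R x ^ 2)
    (φ : ℝ → ℂ)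
    (hφ : ∀ x : ℝ, φ x = ((R x : ℝ) : ℂ) * Complex.exp (Complex.I * ((θ x : ℝ) : ℂ)))
    (A B C : ℝ → ℂ)
    (hA : ∀ x : ℝ, A x = -Complex.I * ζ ^ 2 +
      (Complex.I / 2) * ((‖φ x‖ : ℝ) : ℂ) ^ 2 + (Complex.I / 2) * (ω : ℂ))
    (hB : ∀ x : ℝ, B x = ζ * φ x + (Complex.I / 2) * deriv φ x)
    (hC : ∀ x : ℝ, C x = -ζ * (starRingEnd ℂ) (φ x) +
      (Complex.I / 2) * deriv (fun y => (starRingEnd ℂ) (φ y)) x)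
    (χ₁ χ₂ : ℝ × ℝ → ℂ)
    (hχ₁ : ContDiff ℝ 2 χ₁) (hχ₂ : ContDiff ℝ 2 χ₂)
    (hx₁ : ∀ x t : ℝ, deriv (fun x' => χ₁ (x', t)) x =
      -Complex.I * ζ * χ₁ (x, t) + φ x * χ₂ (x, t))
    (hx₂ : ∀ x t : ℝ, deriv (fun x' => χ₂ (x', t)) x =
      -(starRingEnd ℂ) (φ x) * χ₁ (x, t) + Complex.I * ζ * χ₂ (x, t))
    (ht₁ : ∀ x t : ℝ, deriv (fun t' => χ₁ (x, t')) t =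
      A x * χ₁ (x, t) + B x * χ₂ (x, t))
    (ht₂ : ∀ x t : ℝ, deriv (fun t' => χ₂ (x, t')) t =
      C x * χ₁ (x, t) - A x * χ₂ (x, t))
    (u v : ℝ → ℝ → ℂ)
    (hu : ∀ x t : ℝ, u x t =
      Complex.exp (-Complex.I * ((θ x : ℝ) : ℂ)) * χ₁ (x, t) ^ 2
        - Complex.exp (Complex.I * ((θ x : ℝ) : ℂ)) * χ₂ (x, t) ^ 2)
    (hv : ∀ x t : ℝ, v x t =
      -Complex.I * Complex.exp (-Complex.I * ((θ x : ℝ) : ℂ)) * χ₁ (x, t) ^ 2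
        - Complex.I * Complex.exp (Complex.I * ((θ x : ℝ) : ℂ)) * χ₂ (x, t) ^ 2) :
    ∀ x t : ℝ,
      (deriv (fun t' => u x t') t =
        -(((c / R x ^ 2 : ℝ) : ℂ) * deriv (fun x' => u x' t) x
            - ((c * deriv R x / R x ^ 3 : ℝ) : ℂ) * u x t)
          + (-(1 / 2) * deriv (fun x' => deriv (fun y => v y t) x') x
              - ((R x : ℝ) : ℂ) ^ 2 * v x t - (ω : ℂ) * v x t
              + ((c ^ 2 / (2 * R x ^ 4) : ℝ) : ℂ) * v x t))
      ∧ (deriv (fun t' => v x t') t =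
        -(-(1 / 2) * deriv (fun x' => deriv (fun y => u y t) x') x
            - 3 * ((R x : ℝ) : ℂ) ^ 2 * u x t - (ω : ℂ) * u x t
            + ((c ^ 2 / (2 * R x ^ 4) : ℝ) : ℂ) * u x t)
          - (((c / R x ^ 2 : ℝ) : ℂ) * deriv (fun x' => v x' t) x
            - ((c * deriv R x / R x ^ 3 : ℝ) : ℂ) * v x t)) := by
  intro x t
  have hRd : Differentiable ℝ R := hR.differentiable (by norm_num)
  have hθd : Differentiable ℝ θ := hθ.differentiable (by norm_num)
  have hφd : Differentiable ℝ φ := by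
    rw [funext hφ]
    fun_prop
  have hχ₁d : Differentiable ℝ χ₁ := hχ₁.differentiable (by norm_num)
  have hχ₂d : Differentiable ℝ χ₂ := hχ₂.differentiable (by norm_num)
  have hf₁ (y : ℝ) : HasDerivAt (fun y => χ₁ (y, t)) (-I * ζ * χ₁ (y, t) + φ y * χ₂ (y, t)) y :=
    hx₁ y t ▸ ((by fun_prop : Differentiable ℝ fun y => χ₁ (y, t)) y).hasDerivAt
  have hf₂ (y : ℝ) : HasDerivAt (fun y => χ₂ (y, t))
      (-conj (φ y) * χ₁ (y, t) + I * ζ * χ₂ (y, t)) y :=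
    hx₂ y t ▸ ((by fun_prop : Differentiable ℝ fun y => χ₂ (y, t)) y).hasDerivAt
  obtain ⟨ht₁', ht₂'⟩ := focusing_sq_hasDerivAt_time hf₁ hf₂ (hφd x) (hφ x) (hRpos x).le
    (hA x) (hB x) (hC x)
    (ht₁ x t ▸ ((by fun_prop : Differentiable ℝ fun t' => χ₁ (x, t')) t).hasDerivAt)
    (ht₂ x t ▸ ((by fun_prop : Differentiable ℝ fun t' => χ₂ (x, t')) t).hasDerivAt)
  obtain ⟨hw₁', hw₂'⟩ := differentiableAt_deriv_sq_of_akns (r := fun y => -conj (φ y)) hf₁ hf₂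
    (hφd x) (hφd x).hasDerivAt.star.neg.differentiableAt
  simp only [hu, hv]
  rw [((ht₁'.const_mul (cexp (-I * θ x))).fun_sub (ht₂'.const_mul (cexp (I * θ x)))).deriv,
    ((ht₁'.const_mul (-I * cexp (-I * θ x))).fun_sub (ht₂'.const_mul (I * cexp (I * θ x)))).deriv]
  exact linearized_system_of_gauged_sq (hRd x) (hRpos x).ne'
    (fun y => hθ' y ▸ (hθd y).hasDerivAt) (fun y => ((hf₁ y).pow 2).differentiableAt) hw₁'
    (fun y => ((hf₂ y).pow 2).differentiableAt) hw₂' rfl rfl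

/-- Squared eigenfunction connection. If `φ = R e^{iθ}` is a `C²` elliptic
stationary solution of focusing NLS (with `θ' = c/R²`), `A`, `B`, `C` are the entries of
the temporal Lax matrix, and `χ = (χ₁, χ₂)` is a `C²` solution of the Lax pair, then
`u = e^{−iθ}χ₁² − e^{iθ}χ₂²` and `v = −i e^{−iθ}χ₁² − i e^{iθ}χ₂²` satisfy the linearized
focusing NLS system `∂ₜu = −Su + L₋v`, `∂ₜv = −L₊u − Sv`. -/
theorem squared_eigenfunction_connection
    (ω c : ℝ) (ζ : ℂ) (R θ : ℝ → ℝ)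
    (hR : ContDiff ℝ 2 R) (hθ : ContDiff ℝ 2 θ)
    (hRpos : ∀ x : ℝ, 0 < R x)
    (hθ' : ∀ x : ℝ, deriv θ x = c / R x ^ 2)
    (φ : ℝ → ℂ)
    (hφ : ∀ x : ℝ, φ x = ((R x : ℝ) : ℂ) * Complex.exp (Complex.I * ((θ x : ℝ) : ℂ)))
    (hstat : ∀ x : ℝ, (ω : ℂ) * φ x =
      -(1 / 2) * deriv (deriv φ) x - ((‖φ x‖ : ℝ) : ℂ) ^ 2 * φ x)
    (A B C : ℝ → ℂ)
    (hA : ∀ x : ℝ, A x = -Complex.I * ζ ^ 2 +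
      (Complex.I / 2) * ((‖φ x‖ : ℝ) : ℂ) ^ 2 + (Complex.I / 2) * (ω : ℂ))
    (hB : ∀ x : ℝ, B x = ζ * φ x + (Complex.I / 2) * deriv φ x)
    (hC : ∀ x : ℝ, C x = -ζ * (starRingEnd ℂ) (φ x) +
      (Complex.I / 2) * deriv (fun y => (starRingEnd ℂ) (φ y)) x)
    (χ₁ χ₂ : ℝ × ℝ → ℂ)
    (hχ₁ : ContDiff ℝ 2 χ₁) (hχ₂ : ContDiff ℝ 2 χ₂)
    (hx₁ : ∀ x t : ℝ, deriv (fun x' => χ₁ (x', t)) x =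
      -Complex.I * ζ * χ₁ (x, t) + φ x * χ₂ (x, t))
    (hx₂ : ∀ x t : ℝ, deriv (fun x' => χ₂ (x', t)) x =
      -(starRingEnd ℂ) (φ x) * χ₁ (x, t) + Complex.I * ζ * χ₂ (x, t))
    (ht₁ : ∀ x t : ℝ, deriv (fun t' => χ₁ (x, t')) t =
      A x * χ₁ (x, t) + B x * χ₂ (x, t))
    (ht₂ : ∀ x t : ℝ, deriv (fun t' => χ₂ (x, t')) t =
      C x * χ₁ (x, t) - A x * χ₂ (x, t))
    (u v : ℝ → ℝ → ℂ)
    (hu : ∀ x t : ℝ, u x t =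
      Complex.exp (-Complex.I * ((θ x : ℝ) : ℂ)) * χ₁ (x, t) ^ 2
        - Complex.exp (Complex.I * ((θ x : ℝ) : ℂ)) * χ₂ (x, t) ^ 2)
    (hv : ∀ x t : ℝ, v x t =
      -Complex.I * Complex.exp (-Complex.I * ((θ x : ℝ) : ℂ)) * χ₁ (x, t) ^ 2
        - Complex.I * Complex.exp (Complex.I * ((θ x : ℝ) : ℂ)) * χ₂ (x, t) ^ 2) :
    ∀ x t : ℝ,
      (deriv (fun t' => u x t') t =
        -(((c / R x ^ 2 : ℝ) : ℂ) * deriv (fun x' => u x' t) x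
            - ((c * deriv R x / R x ^ 3 : ℝ) : ℂ) * u x t)
          + (-(1 / 2) * deriv (fun x' => deriv (fun y => v y t) x') x
              - ((R x : ℝ) : ℂ) ^ 2 * v x t - (ω : ℂ) * v x t
              + ((c ^ 2 / (2 * R x ^ 4) : ℝ) : ℂ) * v x t))
      ∧ (deriv (fun t' => v x t') t =
        -(-(1 / 2) * deriv (fun x' => deriv (fun y => u y t) x') x
            - 3 * ((R x : ℝ) : ℂ) ^ 2 * u x t - (ω : ℂ) * u x t
            + ((c ^ 2 / (2 * R x ^ 4) : ℝ) : ℂ) * u x t)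
          - (((c / R x ^ 2 : ℝ) : ℂ) * deriv (fun x' => v x' t) x
            - ((c * deriv R x / R x ^ 3 : ℝ) : ℂ) * v x t)) :=
  squared_eigenfunction_connection_general ω c ζ R θ hR hθ hRpos hθ' φ hφ A B C hA hB hC χ₁ χ₂ hχ₁
    hχ₂ hx₁ hx₂ ht₁ ht₂ u v hu hv
end

section
/- Let ω ∈ ℝ, ζ ∈ ℂ, and let φ : ℝ → ℂ be twice continuously differentiable and satisfy the stationary focusing NLS equation ωφ = −(1/2)φ'' − |φ|²φ. Define A(x) = −iζ² + (i/2)|φ(x)|² + (i/2)ω, B(x) = ζφ(x) + (i/2)φ'(x), C(x) = −ζ·conj(φ(x)) + (i/2)·conj(φ)'(x). Then the function x ↦ A(x)² + B(x)C(x) is constant on ℝ. -/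
/-!
Expanding, `A² + BC = -ζ⁴ + ωζ² - E/4 + (i/2) ζ W` with `E = |φ'|² + (|φ|² + ω)²` and
`W = φ conj φ' - conj φ φ'`. The stationary equation reads `φ'' = V φ` with the real potential
`V = -2 (|φ|² + ω)`; for any real potential the Wronskian `W` of `φ` and `conj φ` is constant, and
for this one `E` is the conserved energy.
-/

open ComplexConjugate

namespace StationaryNLS

variable {φ : ℝ → ℂ}

theorem hasDerivAt_conj_comp {φ' : ℂ} {x : ℝ} (h : HasDerivAt φ φ' x) :
    HasDerivAt (fun y => conj (φ y)) (conj φ') x :=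
  h.star

theorem deriv_conj_comp (x : ℝ) : deriv (fun y => conj (φ y)) x = conj (deriv φ x) :=
  deriv.star

noncomputable def conjWronskian (φ : ℝ → ℂ) (x : ℝ) : ℂ :=
  φ x * conj (deriv φ x) - conj (φ x) * deriv φ x

/-- `|φ'|² + (|φ|² + ω)²`, with each `|z|²` written as `z * conj z` so that the identities below
are ring identities. -/
noncomputable def energy (ω : ℝ) (φ : ℝ → ℂ) (x : ℝ) : ℂ :=
  deriv φ x * conj (deriv φ x) + (φ x * conj (φ x) + ω) ^ 2

theorem hasDerivAt_conjWronskian (hφ : Differentiable ℝ φ) (hφ' : Differentiable ℝ (deriv φ))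
    (x : ℝ) :
    HasDerivAt (conjWronskian φ)
      (φ x * conj (deriv (deriv φ) x) - conj (φ x) * deriv (deriv φ) x) x := by
  have hd := (hφ x).hasDerivAt
  have hd' := (hφ' x).hasDerivAt
  exact ((hd.mul (hasDerivAt_conj_comp hd')).sub
    ((hasDerivAt_conj_comp hd).mul hd')).congr_deriv (by ring)

theorem conjWronskian_eq_of_real_potential (hφ : Differentiable ℝ φ)
    (hφ' : Differentiable ℝ (deriv φ)) (V : ℝ → ℝ)
    (hV : ∀ x, deriv (deriv φ) x = V x * φ x) (x y : ℝ) :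
    conjWronskian φ x = conjWronskian φ y := by
  refine is_const_of_deriv_eq_zero
    (fun x => (hasDerivAt_conjWronskian hφ hφ' x).differentiableAt) (fun x => ?_) x y
  rw [(hasDerivAt_conjWronskian hφ hφ' x).deriv, hV, map_mul, Complex.conj_ofReal]
  ring

theorem hasDerivAt_energy (hφ : Differentiable ℝ φ) (hφ' : Differentiable ℝ (deriv φ))
    (ω x : ℝ) :
    HasDerivAt (energy ω φ)
      (deriv (deriv φ) x * conj (deriv φ x) + deriv φ x * conj (deriv (deriv φ) x) +
        2 * (φ x * conj (φ x) + ω) * (deriv φ x * conj (φ x) + φ x * conj (deriv φ x))) x := by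
  have hd := (hφ x).hasDerivAt
  have hd' := (hφ' x).hasDerivAt
  exact ((hd'.mul (hasDerivAt_conj_comp hd')).add
    (((hd.mul (hasDerivAt_conj_comp hd)).add_const (ω : ℂ)).pow 2)).congr_deriv
    (by simp only [Pi.mul_apply]; ring)

theorem energy_eq_of_stationary (hφ : Differentiable ℝ φ) (hφ' : Differentiable ℝ (deriv φ))
    (ω : ℝ) (hstat : ∀ x, deriv (deriv φ) x = ((-2 * (‖φ x‖ ^ 2 + ω) : ℝ) : ℂ) * φ x)
    (x y : ℝ) :
    energy ω φ x = energy ω φ y := by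
  refine is_const_of_deriv_eq_zero
    (fun x => (hasDerivAt_energy hφ hφ' ω x).differentiableAt) (fun x => ?_) x y
  rw [(hasDerivAt_energy hφ hφ' ω x).deriv, hstat, map_mul, Complex.conj_ofReal]
  push_cast
  rw [Complex.mul_conj']
  ring

theorem lax_sq_add_mul_eq_energy_conjWronskian (ω : ℝ) (ζ : ℂ) (x : ℝ) :
    (-Complex.I * ζ ^ 2 + (Complex.I / 2) * ((‖φ x‖ : ℝ) : ℂ) ^ 2 + (Complex.I / 2) * (ω : ℂ)) ^ 2
      + (ζ * φ x + (Complex.I / 2) * deriv φ x) *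
        (-ζ * conj (φ x) + (Complex.I / 2) * deriv (fun y => conj (φ y)) x)
      = -ζ ^ 4 + ω * ζ ^ 2 - energy ω φ x / 4 + (Complex.I / 2) * ζ * conjWronskian φ x := by
  rw [energy, conjWronskian, ← Complex.mul_conj', deriv_conj_comp]
  linear_combination
    ((ζ ^ 2 - (φ x * conj (φ x) + ω) / 2) ^ 2 + deriv φ x * conj (deriv φ x) / 4) * Complex.I_sq

end StationaryNLS

/-- For a `C²` stationary solution `φ` of focusing NLS
(`ωφ = −(1/2)φ'' − |φ|²φ`) and any `ζ ∈ ℂ`, with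
`A = −iζ² + (i/2)|φ|² + (i/2)ω`, `B = ζφ + (i/2)φ'`, `C = −ζ·conj(φ) + (i/2)·conj(φ)'`,
the function `x ↦ A(x)² + B(x)C(x)` is constant on ℝ. -/
theorem lax_A_sq_add_BC_const
    (ω : ℝ) (ζ : ℂ) (φ : ℝ → ℂ) (hφ : ContDiff ℝ 2 φ)
    (hstat : ∀ x : ℝ, (ω : ℂ) * φ x =
      -(1 / 2) * deriv (deriv φ) x - ((‖φ x‖ : ℝ) : ℂ) ^ 2 * φ x)
    (A B C : ℝ → ℂ)
    (hA : ∀ x : ℝ, A x = -Complex.I * ζ ^ 2 +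
      (Complex.I / 2) * ((‖φ x‖ : ℝ) : ℂ) ^ 2 + (Complex.I / 2) * (ω : ℂ))
    (hB : ∀ x : ℝ, B x = ζ * φ x + (Complex.I / 2) * deriv φ x)
    (hC : ∀ x : ℝ, C x = -ζ * (starRingEnd ℂ) (φ x) +
      (Complex.I / 2) * deriv (fun y => (starRingEnd ℂ) (φ y)) x) :
    ∀ x y : ℝ, A x ^ 2 + B x * C x = A y ^ 2 + B y * C y := by
  open StationaryNLS in
  have hφ₁ : Differentiable ℝ φ := hφ.differentiable two_ne_zero
  have hφ₂ : Differentiable ℝ (deriv φ) := hφ.differentiable_deriv_two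
  have hNLS : ∀ x, deriv (deriv φ) x = ((-2 * (‖φ x‖ ^ 2 + ω) : ℝ) : ℂ) * φ x := fun x => by
    push_cast
    linear_combination 2 * hstat x
  intro x y
  rw [hA, hB, hC, hA, hB, hC, lax_sq_add_mul_eq_energy_conjWronskian,
    lax_sq_add_mul_eq_energy_conjWronskian, energy_eq_of_stationary hφ₁ hφ₂ ω hNLS x y,
    conjWronskian_eq_of_real_potential hφ₁ hφ₂ _ hNLS x y]
end

section
/- Let ω, c, E ∈ ℝ and ζ ∈ ℂ. Let R, θ : ℝ → ℝ be twice continuously differentiable with R(x) > 0, θ'(x) = c/R(x)², and suppose the first integral (R'(x))² + R(x)⁴ + 2ωR(x)² + c²/R(x)² = 2E holds for all x. Set φ = R e^{iθ} and define A(x) = −iζ² + (i/2)|φ(x)|² + (i/2)ω, B(x) = ζφ(x) + (i/2)φ'(x), C(x) = −ζ·conj(φ(x)) + (i/2)·conj(φ)'(x). Then for every x ∈ ℝ, A(x)² + B(x)C(x) = −ζ⁴ + ωζ² + cζ − (ω² + 2E)/4. -/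
/-!
Write `φ = R e^{iθ}`, so that `φ' = (R' + i R θ') e^{iθ}`. Since `|e^{iθ}| = 1`, the phase drops
out of `A² + BC`, which becomes a polynomial in `ζ` whose coefficients are `R²θ'` and
`R'² + R⁴ + 2ωR² + R²θ'² + ω²`. The phase equation turns the first into `c`, and with it
`R²θ'² = c²/R²`, so the first integral turns the second into `ω² + 2E`.
-/

open Complex ComplexConjugate

lemma hasDerivAt_ofReal_mul_exp_I_mul {R θ : ℝ → ℝ} {x R' θ' : ℝ}
    (hR : HasDerivAt R R' x) (hθ : HasDerivAt θ θ' x) :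
    HasDerivAt (fun y => (R y : ℂ) * exp (I * θ y)) ((R' + I * R x * θ') * exp (I * θ x)) x :=
  (hR.ofReal_comp.mul (hθ.ofReal_comp.const_mul I).cexp).congr_deriv (by ring)

lemma exp_I_mul_ofReal_mul_conj (t : ℝ) : exp (I * t) * conj (exp (I * t)) = 1 := by
  rw [mul_conj', norm_exp_I_mul_ofReal]
  norm_num

lemma lax_A_sq_add_BC_polar (ζ e : ℂ) (ω r r' t' : ℝ) (he : e * conj e = 1) :
    (-I * ζ ^ 2 + I / 2 * (r : ℂ) ^ 2 + I / 2 * ω) ^ 2 +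
        (ζ * (r * e) + I / 2 * ((r' + I * r * t') * e)) *
          (-ζ * conj (r * e) + I / 2 * conj ((r' + I * r * t') * e)) =
      -ζ ^ 4 + ω * ζ ^ 2 + (r ^ 2 * t' : ℝ) * ζ -
        ((r' ^ 2 + r ^ 4 + 2 * ω * r ^ 2 + r ^ 2 * t' ^ 2 + ω ^ 2) / 4 : ℝ) := by
  simp only [map_mul, map_add, conj_ofReal, conj_I]
  push_cast
  grind [I_sq]

/-- For an elliptic stationary solution `φ = R e^{iθ}` of focusing NLS with
`θ' = c/R²` and first integral `(R')² + R⁴ + 2ωR² + c²/R² = 2E`, and for `A`, `B`, `C`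
the entries of the temporal Lax matrix, one has for every `x`:
`A(x)² + B(x)C(x) = −ζ⁴ + ωζ² + cζ − (ω² + 2E)/4`. -/
theorem lax_A_sq_add_BC_value
    (ω c E : ℝ) (ζ : ℂ) (R θ : ℝ → ℝ)
    (hR : ContDiff ℝ 2 R) (hθ : ContDiff ℝ 2 θ)
    (hRpos : ∀ x : ℝ, 0 < R x)
    (hθ' : ∀ x : ℝ, deriv θ x = c / R x ^ 2)
    (hfirst : ∀ x : ℝ,
      (deriv R x) ^ 2 + R x ^ 4 + 2 * ω * R x ^ 2 + c ^ 2 / R x ^ 2 = 2 * E)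
    (φ : ℝ → ℂ)
    (hφ : ∀ x : ℝ, φ x = ((R x : ℝ) : ℂ) * Complex.exp (Complex.I * ((θ x : ℝ) : ℂ)))
    (A B C : ℝ → ℂ)
    (hA : ∀ x : ℝ, A x = -Complex.I * ζ ^ 2 +
      (Complex.I / 2) * ((‖φ x‖ : ℝ) : ℂ) ^ 2 + (Complex.I / 2) * (ω : ℂ))
    (hB : ∀ x : ℝ, B x = ζ * φ x + (Complex.I / 2) * deriv φ x)
    (hC : ∀ x : ℝ, C x = -ζ * (starRingEnd ℂ) (φ x) +
      (Complex.I / 2) * deriv (fun y => (starRingEnd ℂ) (φ y)) x) :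
    ∀ x : ℝ, A x ^ 2 + B x * C x =
      -ζ ^ 4 + (ω : ℂ) * ζ ^ 2 + (c : ℂ) * ζ - (((ω ^ 2 + 2 * E) / 4 : ℝ) : ℂ) := by
  intro x
  have hRx : R x ≠ 0 := (hRpos x).ne'
  have hdφ : deriv φ x = (deriv R x + I * R x * deriv θ x) * exp (I * θ x) := by
    rw [funext hφ]
    exact (hasDerivAt_ofReal_mul_exp_I_mul ((hR.differentiable two_ne_zero) x).hasDerivAt
      ((hθ.differentiable two_ne_zero) x).hasDerivAt).deriv
  have hdφ_conj : deriv (fun y => conj (φ y)) x = conj (deriv φ x) := deriv.star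
  have hnorm : ‖φ x‖ = R x := by
    rw [hφ x, norm_mul, norm_exp_I_mul_ofReal, mul_one, norm_real, Real.norm_of_nonneg (hRpos x).le]
  have hphase : R x ^ 2 * deriv θ x = c := by
    rw [hθ' x]
    field_simp
  have henergy : deriv R x ^ 2 + R x ^ 4 + 2 * ω * R x ^ 2 + R x ^ 2 * deriv θ x ^ 2 + ω ^ 2 =
      ω ^ 2 + 2 * E := by
    rw [hθ' x, ← hfirst x]
    field_simp
    ring
  rw [hA, hB, hC, hdφ_conj, hdφ, hnorm, hφ x,
    lax_A_sq_add_BC_polar _ _ _ _ _ _ (exp_I_mul_ofReal_mul_conj _), hphase, henergy]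
end

section
/- Let k, b ∈ ℝ with 0 ≤ k < 1 and k² ≤ b ≤ 1, and set ω = (1 + k² − 3b)/2 and c = √(b(1−b)(b−k²)). Then for every ζ ∈ ℂ, −ζ⁴ + ωζ² + cζ + (1/16)(3b² − 2b(1+k²) − (1−k²)²) = −(1/16)((1 + k² − b − 4ζ²)² + 4(2√b·ζ − √((1−b)(b−k²)))²). In particular, Q(ζ) := −ζ⁴ + ωζ² + cζ + (1/16)(3b² − 2b(1+k²) − (1−k²)²) satisfies Q(ζ) ≤ 0 for every real ζ. -/
/-- With `ω = (1 + k² − 3b)/2` and `c = √(b(1−b)(b−k²))`, for every complex `ζ`,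
`−ζ⁴ + ωζ² + cζ + (1/16)(3b² − 2b(1+k²) − (1−k²)²)
  = −(1/16)((1 + k² − b − 4ζ²)² + 4(2√b·ζ − √((1−b)(b−k²)))²)`,
and in particular the real quartic `Q` is nonpositive on the real axis. -/
theorem quartic_identity_and_nonpositive_on_reals
    (k b : ℝ) (hk0 : 0 ≤ k) (hk1 : k < 1) (hbk : k ^ 2 ≤ b) (hb1 : b ≤ 1)
    (ω c : ℝ) (hω : ω = (1 + k ^ 2 - 3 * b) / 2)
    (hc : c = Real.sqrt (b * (1 - b) * (b - k ^ 2))) :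
    (∀ ζ : ℂ,
      -ζ ^ 4 + (ω : ℂ) * ζ ^ 2 + (c : ℂ) * ζ +
          (1 / 16) * ((3 * b ^ 2 - 2 * b * (1 + k ^ 2) - (1 - k ^ 2) ^ 2 : ℝ) : ℂ)
        = -(1 / 16) * ((((1 + k ^ 2 - b : ℝ) : ℂ) - 4 * ζ ^ 2) ^ 2 +
            4 * (2 * ((Real.sqrt b : ℝ) : ℂ) * ζ -
              ((Real.sqrt ((1 - b) * (b - k ^ 2)) : ℝ) : ℂ)) ^ 2))
    ∧ (∀ ζ : ℝ,
        -ζ ^ 4 + ω * ζ ^ 2 + c * ζ +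
          (1 / 16) * (3 * b ^ 2 - 2 * b * (1 + k ^ 2) - (1 - k ^ 2) ^ 2) ≤ 0) := by

  have hb0 : (0:ℝ) ≤ b := le_trans (sq_nonneg k) hbk
  have hd0 : (0:ℝ) ≤ (1 - b) * (b - k ^ 2) :=
    mul_nonneg (by linarith) (by linarith)
  set s1 := Real.sqrt b with hs1
  set s2 := Real.sqrt ((1 - b) * (b - k ^ 2)) with hs2
  have h1 : s1 ^ 2 = b := Real.sq_sqrt hb0
  have h2 : s2 ^ 2 = (1 - b) * (b - k ^ 2) := Real.sq_sqrt hd0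
  have hc' : c = s1 * s2 := by
    rw [hc, show b * (1 - b) * (b - k ^ 2) = b * ((1 - b) * (b - k ^ 2)) by ring,
      Real.sqrt_mul hb0]
  constructor
  · intro ζ
    have H1 : ((s1 : ℂ)) ^ 2 = (b : ℂ) := by exact_mod_cast congrArg (fun x : ℝ => (x : ℂ)) h1
    have H2 : ((s2 : ℂ)) ^ 2 = (((1 - b) * (b - k ^ 2) : ℝ) : ℂ) := by
      exact_mod_cast congrArg (fun x : ℝ => (x : ℂ)) h2
    rw [hω, hc']
    push_cast
    push_cast at H2
    linear_combination ζ ^ 2 * H1 + (1 / 4 : ℂ) * H2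
  · intro ζ
    have key : -ζ ^ 4 + ω * ζ ^ 2 + c * ζ +
        (1 / 16) * (3 * b ^ 2 - 2 * b * (1 + k ^ 2) - (1 - k ^ 2) ^ 2)
        = -(1 / 16) * (((1 + k ^ 2 - b) - 4 * ζ ^ 2) ^ 2 + 4 * (2 * s1 * ζ - s2) ^ 2) := by
      rw [hω, hc']
      linear_combination ζ ^ 2 * h1 + (1 / 4 : ℝ) * h2
    rw [key]
    nlinarith [sq_nonneg ((1 + k ^ 2 - b) - 4 * ζ ^ 2), sq_nonneg (2 * s1 * ζ - s2)]
end

section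
/- Let k, b ∈ ℝ with 0 ≤ k < 1 and k² ≤ b ≤ 1, set ω = (1 + k² − 3b)/2 and c = √(b(1−b)(b−k²)), and let Q(ζ) = −ζ⁴ + ωζ² + cζ + (1/16)(3b² − 2b(1+k²) − (1−k²)²). Then for all ζ ∈ ℂ, Q(ζ) = −(ζ − ζ₁)(ζ − ζ₂)(ζ − ζ₃)(ζ − ζ₄), where ζ₁ = √(1−b)/2 + i(√b − √(b−k²))/2, ζ₂ = √(1−b)/2 − i(√b − √(b−k²))/2, ζ₃ = −√(1−b)/2 + i(√b + √(b−k²))/2, and ζ₄ = −√(1−b)/2 − i(√b + √(b−k²))/2. -/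
/-- The quartic `Q(ζ) = −ζ⁴ + ωζ² + cζ + (1/16)(3b² − 2b(1+k²) − (1−k²)²)`
factors as `−(ζ − ζ₁)(ζ − ζ₂)(ζ − ζ₃)(ζ − ζ₄)` with the four explicit roots
`ζ₁ = √(1−b)/2 + i(√b − √(b−k²))/2`, `ζ₂ = √(1−b)/2 − i(√b − √(b−k²))/2`,
`ζ₃ = −√(1−b)/2 + i(√b + √(b−k²))/2`, `ζ₄ = −√(1−b)/2 − i(√b + √(b−k²))/2`. -/
theorem quartic_factorization
    (k b : ℝ) (hk0 : 0 ≤ k) (hk1 : k < 1) (hbk : k ^ 2 ≤ b) (hb1 : b ≤ 1)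
    (ω c : ℝ) (hω : ω = (1 + k ^ 2 - 3 * b) / 2)
    (hc : c = Real.sqrt (b * (1 - b) * (b - k ^ 2)))
    (ζ₁ ζ₂ ζ₃ ζ₄ : ℂ)
    (hζ₁ : ζ₁ = ((Real.sqrt (1 - b) / 2 : ℝ) : ℂ) +
      Complex.I * (((Real.sqrt b - Real.sqrt (b - k ^ 2)) / 2 : ℝ) : ℂ))
    (hζ₂ : ζ₂ = ((Real.sqrt (1 - b) / 2 : ℝ) : ℂ) -
      Complex.I * (((Real.sqrt b - Real.sqrt (b - k ^ 2)) / 2 : ℝ) : ℂ))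
    (hζ₃ : ζ₃ = -((Real.sqrt (1 - b) / 2 : ℝ) : ℂ) +
      Complex.I * (((Real.sqrt b + Real.sqrt (b - k ^ 2)) / 2 : ℝ) : ℂ))
    (hζ₄ : ζ₄ = -((Real.sqrt (1 - b) / 2 : ℝ) : ℂ) -
      Complex.I * (((Real.sqrt b + Real.sqrt (b - k ^ 2)) / 2 : ℝ) : ℂ)) :
    ∀ ζ : ℂ,
      -ζ ^ 4 + (ω : ℂ) * ζ ^ 2 + (c : ℂ) * ζ +
          (1 / 16) * ((3 * b ^ 2 - 2 * b * (1 + k ^ 2) - (1 - k ^ 2) ^ 2 : ℝ) : ℂ)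
        = -((ζ - ζ₁) * (ζ - ζ₂) * (ζ - ζ₃) * (ζ - ζ₄)) := by
  have hb0 : 0 ≤ b := le_trans (sq_nonneg k) hbk
  have h1b : 0 ≤ 1 - b := by linarith
  have hbk' : 0 ≤ b - k ^ 2 := by linarith
  have ha : Real.sqrt (1 - b) ^ 2 = 1 - b := Real.sq_sqrt h1b
  have hB : Real.sqrt b ^ 2 = b := Real.sq_sqrt hb0
  have hCr : Real.sqrt (b - k ^ 2) ^ 2 = b - k ^ 2 := Real.sq_sqrt hbk'
  have hcc : Real.sqrt (b * (1 - b) * (b - k ^ 2))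
      = Real.sqrt b * Real.sqrt (1 - b) * Real.sqrt (b - k ^ 2) := by
    rw [Real.sqrt_mul (mul_nonneg hb0 h1b), Real.sqrt_mul hb0]
  intro ζ
  subst hω hc hζ₁ hζ₂ hζ₃ hζ₄
  have haC : ((Real.sqrt (1 - b) : ℝ) : ℂ) ^ 2 = 1 - (b : ℂ) := by exact_mod_cast ha
  have hBC : ((Real.sqrt b : ℝ) : ℂ) ^ 2 = (b : ℂ) := by exact_mod_cast hB
  have hCC : ((Real.sqrt (b - k ^ 2) : ℝ) : ℂ) ^ 2 = (b : ℂ) - (k : ℂ) ^ 2 := by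
    exact_mod_cast hCr
  have hccC : ((Real.sqrt (b * (1 - b) * (b - k ^ 2)) : ℝ) : ℂ)
      = ((Real.sqrt b : ℝ) : ℂ) * ((Real.sqrt (1 - b) : ℝ) : ℂ)
        * ((Real.sqrt (b - k ^ 2) : ℝ) : ℂ) := by exact_mod_cast hcc
  push_cast
  set a : ℂ := ((Real.sqrt (1 - b) : ℝ) : ℂ) with ha'
  set B : ℂ := ((Real.sqrt b : ℝ) : ℂ) with hB'
  set C : ℂ := ((Real.sqrt (b - k ^ 2) : ℝ) : ℂ) with hC'
  linear_combination
    (-(ζ ^ 2) / 2 + (a ^ 2 + 1 - (b : ℂ) + 2 * B ^ 2 + 2 * C ^ 2) / 16) * haC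
    + (ζ ^ 2 / 2 + (B ^ 2 - (b : ℂ) + 2 - 2 * C ^ 2) / 16) * hBC
    + (ζ ^ 2 / 2 + (C ^ 2 - 3 * (b : ℂ) - (k : ℂ) ^ 2 + 2) / 16) * hCC
    + ζ * hccC
    + (-(((ζ - a / 2) ^ 2) * (((B + C) / 2) ^ 2)
        + ((ζ + a / 2) ^ 2) * (((B - C) / 2) ^ 2))
      + (Complex.I ^ 2 - 1) * (((B - C) / 2) ^ 2) * (((B + C) / 2) ^ 2))
      * Complex.I_sq
end

section
/- Let k, b ∈ ℝ with 0 < k < 1 and k² < b < (1 + 3k² + 3k⁴ + k⁶)/(9(1 − k² + k⁴)), and set ω = (1 + k² − 3b)/2 and c = √(b(1−b)(b−k²)). Then the cubic polynomial −4ζ³ + 2ωζ + c (the derivative of the quartic Q(ζ) = −ζ⁴ + ωζ² + cζ + (1/16)(3b² − 2b(1+k²) − (1−k²)²)) has three distinct real roots. -/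
set_option maxHeartbeats 1000000 in
/-- For `0 < k < 1` and `k² < b < (1 + 3k² + 3k⁴ + k⁶)/(9(1 − k² + k⁴))`, with
`ω = (1 + k² − 3b)/2` and `c = √(b(1−b)(b−k²))`, the cubic `−4ζ³ + 2ωζ + c` has three
distinct real roots. -/
theorem cubic_three_distinct_real_roots
    (k b : ℝ) (hk0 : 0 < k) (hk1 : k < 1)
    (hbk : k ^ 2 < b)
    (hb : b < (1 + 3 * k ^ 2 + 3 * k ^ 4 + k ^ 6) / (9 * (1 - k ^ 2 + k ^ 4)))
    (ω c : ℝ) (hω : ω = (1 + k ^ 2 - 3 * b) / 2)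
    (hc : c = Real.sqrt (b * (1 - b) * (b - k ^ 2))) :
    ∃ r₁ r₂ r₃ : ℝ, r₁ ≠ r₂ ∧ r₁ ≠ r₃ ∧ r₂ ≠ r₃ ∧
      -4 * r₁ ^ 3 + 2 * ω * r₁ + c = 0 ∧
      -4 * r₂ ^ 3 + 2 * ω * r₂ + c = 0 ∧
      -4 * r₃ ^ 3 + 2 * ω * r₃ + c = 0 := by
  have hk2 : k ^ 2 < 1 := by nlinarith
  have hden : (0:ℝ) < 9 * (1 - k ^ 2 + k ^ 4) := by nlinarith [sq_nonneg (k^2 - 1), sq_nonneg k]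
  have hb' : b * (9 * (1 - k ^ 2 + k ^ 4)) < 1 + 3 * k ^ 2 + 3 * k ^ 4 + k ^ 6 :=
    (lt_div_iff₀ hden).mp hb
  have hb1 : b < 1 := by nlinarith [mul_pos (mul_pos (by nlinarith : (0:ℝ) < 2 - k^2) (by nlinarith : (0:ℝ) < 2 - k^2)) (by nlinarith : (0:ℝ) < 2 - k^2)]
  have hbpos : 0 < b := lt_trans (by positivity) hbk
  have hprod : 0 ≤ b * (1 - b) * (b - k ^ 2) := by
    apply mul_nonneg (mul_nonneg hbpos.le (by linarith)) (by linarith)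
  have hc0 : 0 ≤ c := hc ▸ Real.sqrt_nonneg _
  have hc2 : c ^ 2 = b * (1 - b) * (b - k ^ 2) := by
    rw [hc, Real.sq_sqrt hprod]
  have key : 27 * c ^ 2 < 8 * ω ^ 3 := by
    rw [hc2, hω]
    nlinarith [hb']
  have hω0 : 0 < ω := by nlinarith [sq_nonneg ω, sq_nonneg c]
  obtain ⟨t, ht⟩ : ∃ t, t = Real.sqrt (ω / 6) := ⟨_, rfl⟩
  have ht2 : t ^ 2 = ω / 6 := by rw [ht]; exact Real.sq_sqrt (by positivity)
  have ht0 : 0 < t := by rw [ht]; exact Real.sqrt_pos.mpr (by positivity)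
  obtain ⟨f, hf⟩ : ∃ f : ℝ → ℝ, f = fun x => -4 * x ^ 3 + 2 * ω * x + c := ⟨_, rfl⟩
  have hcont : Continuous f := by rw [hf]; fun_prop
  have fnt : f (-t) < 0 := by
    have h1 : f (-t) = -(4 / 3 * ω * t) + c := by
      rw [hf]; show -4 * (-t) ^ 3 + 2 * ω * (-t) + c = -(4 / 3 * ω * t) + c
      linear_combination (4 * t) * ht2
    have hX : 0 < 4 / 3 * ω * t := by positivity
    have hX2 : c ^ 2 < (4 / 3 * ω * t) ^ 2 := by
      have : (4 / 3 * ω * t) ^ 2 = 16 / 9 * ω ^ 2 * t ^ 2 := by ring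
      rw [this, ht2]; nlinarith [key]
    have hcX : c < 4 / 3 * ω * t := lt_of_pow_lt_pow_left₀ 2 hX.le hX2
    rw [h1]; linarith
  have fpt : 0 < f t := by
    have h1 : f t = 4 / 3 * ω * t + c := by
      rw [hf]; show -4 * t ^ 3 + 2 * ω * t + c = 4 / 3 * ω * t + c
      linear_combination (-4 * t) * ht2
    rw [h1]; positivity
  obtain ⟨M, hM⟩ : ∃ M : ℝ, M = ω + c + 1 := ⟨_, rfl⟩
  have hMpos : 0 < M := by rw [hM]; positivity
  have hM1 : (1:ℝ) ≤ M := by rw [hM]; linarith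
  have hM2 : M ≤ M ^ 2 := by nlinarith [mul_le_mul_of_nonneg_left hM1 hMpos.le]
  have hωM : ω < M := by rw [hM]; linarith
  have hMt : t < M := by
    have h2 : t ^ 2 < M ^ 2 := by rw [ht2]; linarith
    exact lt_of_pow_lt_pow_left₀ 2 hMpos.le h2
  have hM3 : M ^ 2 ≤ M ^ 3 := by nlinarith [mul_le_mul_of_nonneg_left hM2 hMpos.le]
  have hkey2 : 2 * ω * M + c < 2 * M ^ 2 := by nlinarith [mul_le_mul_of_nonneg_left hM1 hMpos.le]
  have fM : f M < 0 := by
    rw [hf]; show -4 * M ^ 3 + 2 * ω * M + c < 0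
    nlinarith [pow_pos hMpos 3]
  have fnM : 0 < f (-M) := by
    rw [hf]; show 0 < -4 * (-M) ^ 3 + 2 * ω * (-M) + c
    nlinarith [pow_pos hMpos 3]
  -- root in [-M, -t]
  obtain ⟨r₁, hr₁mem, hr₁⟩ := intermediate_value_Icc' (by linarith : -M ≤ -t)
    hcont.continuousOn ⟨fnt.le, fnM.le⟩
  obtain ⟨r₂, hr₂mem, hr₂⟩ := intermediate_value_Icc (by linarith : -t ≤ t)
    hcont.continuousOn ⟨fnt.le, fpt.le⟩
  obtain ⟨r₃, hr₃mem, hr₃⟩ := intermediate_value_Icc' (by linarith : t ≤ M)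
    hcont.continuousOn ⟨fM.le, fpt.le⟩
  have h1 : r₁ < -t := lt_of_le_of_ne hr₁mem.2 (fun h => by rw [h] at hr₁; linarith [fnt, hr₁.symm ▸ fnt])
  have h2l : -t < r₂ := lt_of_le_of_ne hr₂mem.1 (fun h => by rw [← h] at hr₂; linarith)
  have h2r : r₂ < t := lt_of_le_of_ne hr₂mem.2 (fun h => by rw [h] at hr₂; linarith)
  have h3 : t < r₃ := lt_of_le_of_ne hr₃mem.1 (fun h => by rw [← h] at hr₃; linarith)
  simp only [hf] at hr₁ hr₂ hr₃
  refine ⟨r₁, r₂, r₃, by linarith, by linarith, by linarith, hr₁, hr₂, hr₃⟩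
end

section
/- Let P be a positive integer and let b ∈ ℝ with 0 < b ≤ 1/P². Then for every s ∈ [−√b, √b] such that P·√(b − s²) is an integer, one has bs² − s⁴ = 0; equivalently, every spectral element λ = ±(2√(bs² − s⁴) + 2i·sgn(s)·√((1−b)(b − s²))) of the Stokes wave whose Floquet exponent μ = −2·sgn(s)·√(b − s²) + 2n (n ∈ ℤ) lies in (2/P)ℤ has zero real part. -/
/-- For a positive integer `P` and `0 < b ≤ 1/P²`: for every
`s ∈ [−√b, √b]` with `P·√(b − s²) ∈ ℤ` one has `bs² − s⁴ = 0`; equivalently, every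
spectral element `λ = ±(2√(bs² − s⁴) + 2i·sgn(s)·√((1−b)(b − s²)))` whose Floquet
exponent `μ = −2·sgn(s)·√(b − s²) + 2n` lies in `(2/P)ℤ` has zero real part. -/
theorem stokes_subharmonic_stability
    (P : ℕ) (hP : 0 < P) (b : ℝ) (hb0 : 0 < b) (hbP : b ≤ 1 / (P : ℝ) ^ 2) :
    (∀ s : ℝ, s ∈ Set.Icc (-Real.sqrt b) (Real.sqrt b) →
      (∃ m : ℤ, (P : ℝ) * Real.sqrt (b - s ^ 2) = (m : ℝ)) →
      b * s ^ 2 - s ^ 4 = 0)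
    ∧ (∀ s : ℝ, s ∈ Set.Icc (-Real.sqrt b) (Real.sqrt b) →
        ∀ n : ℤ,
          (∃ m : ℤ, -2 * Real.sign s * Real.sqrt (b - s ^ 2) + 2 * (n : ℝ)
            = (2 / (P : ℝ)) * (m : ℝ)) →
          ∀ lam : ℂ,
            (lam = ((2 * Real.sqrt (b * s ^ 2 - s ^ 4) : ℝ) : ℂ) +
                2 * Complex.I * ((Real.sign s : ℝ) : ℂ) *
                  ((Real.sqrt ((1 - b) * (b - s ^ 2)) : ℝ) : ℂ) ∨
              lam = -(((2 * Real.sqrt (b * s ^ 2 - s ^ 4) : ℝ) : ℂ) +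
                2 * Complex.I * ((Real.sign s : ℝ) : ℂ) *
                  ((Real.sqrt ((1 - b) * (b - s ^ 2)) : ℝ) : ℂ))) →
            lam.re = 0) := by
  have hPpos : (0:ℝ) < (P : ℝ) := by exact_mod_cast hP
  have key : ∀ s : ℝ, s ∈ Set.Icc (-Real.sqrt b) (Real.sqrt b) →
      (∃ m : ℤ, (P : ℝ) * Real.sqrt (b - s ^ 2) = (m : ℝ)) →
      b * s ^ 2 - s ^ 4 = 0 := by
    intro s hs ⟨m, hm⟩
    have habs : |s| ≤ Real.sqrt b := abs_le.mpr ⟨hs.1, hs.2⟩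
    have hs2 : s ^ 2 ≤ b := by
      have := sq_abs s ▸ pow_le_pow_left₀ (abs_nonneg s) habs 2
      simpa [Real.sq_sqrt hb0.le] using this
    have ht0 : 0 ≤ b - s ^ 2 := by linarith
    have hsq : Real.sqrt (b - s ^ 2) ≤ 1 / (P : ℝ) := by
      have h1 : Real.sqrt (b - s ^ 2) ≤ Real.sqrt (1 / (P : ℝ) ^ 2) :=
        Real.sqrt_le_sqrt (by nlinarith [sq_nonneg s])
      have h2 : Real.sqrt (1 / (P : ℝ) ^ 2) = 1 / (P : ℝ) := by
        rw [show 1 / (P : ℝ) ^ 2 = (1 / (P : ℝ)) ^ 2 by ring,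
          Real.sqrt_sq (by positivity)]
      linarith [h2 ▸ h1]
    have hm0 : (0:ℝ) ≤ (m : ℝ) := hm ▸ mul_nonneg hPpos.le (Real.sqrt_nonneg _)
    have hm1 : (m : ℝ) ≤ 1 := by
      rw [← hm]
      calc (P : ℝ) * Real.sqrt (b - s ^ 2) ≤ (P : ℝ) * (1 / (P : ℝ)) :=
            mul_le_mul_of_nonneg_left hsq hPpos.le
        _ = 1 := by field_simp
    have hm0' : (0:ℤ) ≤ m := by exact_mod_cast hm0
    have hm1' : m ≤ 1 := by exact_mod_cast hm1
    interval_cases m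
    · -- m = 0 : sqrt = 0, so b = s^2
      simp only [Int.cast_zero] at hm
      have : Real.sqrt (b - s ^ 2) = 0 := by
        rcases mul_eq_zero.mp hm with h | h
        · exact absurd h hPpos.ne'
        · exact h
      have hb : b - s ^ 2 = 0 := by
        have := Real.sqrt_eq_zero ht0 |>.mp this
        exact this
      nlinarith
    · -- m = 1 : sqrt = 1/P, so b - s^2 = 1/P^2 ≥ b, hence s = 0
      simp only [Int.cast_one] at hm
      have hsq1 : Real.sqrt (b - s ^ 2) = 1 / (P : ℝ) := by
        field_simp at hm ⊢
        linarith
      have : b - s ^ 2 = 1 / (P : ℝ) ^ 2 := by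
        have := congrArg (· ^ 2) hsq1
        simpa [Real.sq_sqrt ht0] using this
      have hs0 : s ^ 2 ≤ 0 := by linarith
      have hs0' : s ^ 2 = 0 := le_antisymm hs0 (sq_nonneg s)
      have : s = 0 := by nlinarith
      simp [this]
  refine ⟨key, ?_⟩
  intro s hs n ⟨m, hμ⟩ lam hlam
  have hzero : b * s ^ 2 - s ^ 4 = 0 := by
    rcases eq_or_ne s 0 with h0 | h0
    · simp [h0]
    · apply key s hs
      rcases lt_or_gt_of_ne h0 with hneg | hpos
      · have hsgn : Real.sign s = -1 := Real.sign_of_neg hneg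
        rw [hsgn] at hμ
        refine ⟨m - n * P, ?_⟩
        have : (P : ℝ) * Real.sqrt (b - s ^ 2) = (m : ℝ) - (n : ℝ) * (P : ℝ) := by
          field_simp at hμ
          nlinarith [hμ]
        push_cast
        linarith
      · have hsgn : Real.sign s = 1 := Real.sign_of_pos hpos
        rw [hsgn] at hμ
        refine ⟨n * P - m, ?_⟩
        have : (P : ℝ) * Real.sqrt (b - s ^ 2) = (n : ℝ) * (P : ℝ) - (m : ℝ) := by
          field_simp at hμ
          nlinarith [hμ]
        push_cast
        linarith
  have hsq0 : Real.sqrt (b * s ^ 2 - s ^ 4) = 0 := by rw [hzero, Real.sqrt_zero]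
  rcases hlam with h | h <;> subst h <;>
    simp [hsq0, Complex.add_re, Complex.mul_re, Complex.I_re, Complex.I_im]
end

section
/- Let U ⊆ ℂ be open, let f : U → ℂ be holomorphic on U, let I ⊆ ℝ be an open interval, and let γ : I → U be continuously differentiable with γ'(t) ≠ 0 and f'(γ(t)) ≠ 0 for all t ∈ I. If the function t ↦ Re(f(γ(t))) is constant on I, then the function t ↦ Im(f(γ(t))) is strictly monotone on I. -/
/-- If `f` is holomorphic on an open set `U`, `γ : I → U` is a `C¹` curve on
an open interval `I = (a,b)` with `γ'(t) ≠ 0` and `f'(γ(t)) ≠ 0` for all `t ∈ I`, and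
`t ↦ Re(f(γ(t)))` is constant on `I`, then `t ↦ Im(f(γ(t)))` is strictly monotone on `I`. -/
theorem im_strict_monotone_on_re_level_curve
    (U : Set ℂ) (hU : IsOpen U) (f : ℂ → ℂ) (hf : DifferentiableOn ℂ f U)
    (a b : ℝ) (γ γ' : ℝ → ℂ)
    (hmaps : ∀ t ∈ Set.Ioo a b, γ t ∈ U)
    (hγ : ∀ t ∈ Set.Ioo a b, HasDerivAt γ (γ' t) t)
    (hγ'cont : ContinuousOn γ' (Set.Ioo a b))
    (hγ'ne : ∀ t ∈ Set.Ioo a b, γ' t ≠ 0)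
    (hf'ne : ∀ t ∈ Set.Ioo a b, deriv f (γ t) ≠ 0)
    (hconst : ∃ C : ℝ, ∀ t ∈ Set.Ioo a b, (f (γ t)).re = C) :
    StrictMonoOn (fun t => (f (γ t)).im) (Set.Ioo a b) ∨
      StrictAntiOn (fun t => (f (γ t)).im) (Set.Ioo a b) := by
  set I := Set.Ioo a b with hI
  -- derivative of the composition
  set d : ℝ → ℂ := fun t => deriv f (γ t) * γ' t with hd
  have hH : ∀ t ∈ I, HasDerivAt (fun s => f (γ s)) (d t) t := by
    intro t ht
    have hfd : DifferentiableAt ℂ f (γ t) :=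
      (hf (γ t) (hmaps t ht)).differentiableAt (hU.mem_nhds (hmaps t ht))
    exact hfd.hasDerivAt.comp t (hγ t ht)
  have hre : ∀ t ∈ I, HasDerivAt (fun s => (f (γ s)).re) ((d t).re) t := fun t ht =>
    Complex.reCLM.hasFDerivAt.comp_hasDerivAt t (hH t ht)
  have him : ∀ t ∈ I, HasDerivAt (fun s => (f (γ s)).im) ((d t).im) t := fun t ht =>
    Complex.imCLM.hasFDerivAt.comp_hasDerivAt t (hH t ht)
  -- the real part of d vanishes
  obtain ⟨C, hC⟩ := hconst
  have hre0 : ∀ t ∈ I, (d t).re = 0 := by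
    intro t ht
    have h1 : HasDerivAt (fun s => (f (γ s)).re) 0 t := by
      have heq : (fun s => (f (γ s)).re) =ᶠ[nhds t] fun _ => C := by
        filter_upwards [isOpen_Ioo.mem_nhds ht] with s hs using hC s hs
      exact (hasDerivAt_const t C).congr_of_eventuallyEq heq
    exact (hre t ht).unique h1
  have himne : ∀ t ∈ I, (d t).im ≠ 0 := by
    intro t ht h0
    have h00 : d t = 0 := Complex.ext (hre0 t ht) h0
    exact (mul_ne_zero (hf'ne t ht) (hγ'ne t ht)) h00
  -- continuity of (d ·).im on I
  have hγc : ContinuousOn γ I := fun t ht => ((hγ t ht).continuousAt).continuousWithinAt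
  have hderiv_cont : ContinuousOn (deriv f) U := ((hf.analyticOnNhd hU).deriv).continuousOn
  have hdimc : ContinuousOn (fun t => (d t).im) I :=
    Complex.continuous_im.comp_continuousOn ((hderiv_cont.comp hγc hmaps).mul hγ'cont)
  -- sign dichotomy via connectedness of the image
  have hsign : (∀ t ∈ I, 0 < (d t).im) ∨ (∀ t ∈ I, (d t).im < 0) := by
    by_contra hcon
    push_neg at hcon
    obtain ⟨⟨x, hx, hxle⟩, ⟨y, hy, hyle⟩⟩ := hcon
    have hxneg : (d x).im < 0 := lt_of_le_of_ne hxle (himne x hx)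
    have hypos : 0 < (d y).im := lt_of_le_of_ne hyle (Ne.symm (himne y hy))
    have hconn : IsPreconnected ((fun t => (d t).im) '' I) :=
      (isPreconnected_Ioo).image _ hdimc
    have h0mem : (0:ℝ) ∈ (fun t => (d t).im) '' I :=
      hconn.ordConnected.out ⟨x, hx, rfl⟩ ⟨y, hy, rfl⟩ ⟨le_of_lt hxneg, le_of_lt hypos⟩
    obtain ⟨z, hz, hz0⟩ := h0mem
    exact himne z hz hz0
  -- conclude
  have hcont : ContinuousOn (fun t => (f (γ t)).im) I := fun t ht =>
    ((him t ht).continuousAt).continuousWithinAt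
  have hint : interior I = I := interior_Ioo
  rcases hsign with hpos | hneg
  · left
    refine strictMonoOn_of_deriv_pos (convex_Ioo a b) hcont ?_
    intro t ht
    rw [hint] at ht
    rw [(him t ht).deriv]
    exact hpos t ht
  · right
    refine strictAntiOn_of_deriv_neg (convex_Ioo a b) hcont ?_
    intro t ht
    rw [hint] at ht
    rw [(him t ht).deriv]
    exact hneg t ht
end

section
/- Let k ∈ (0,1), set k' = √(1−k²), and let Q(ζ) = −ζ⁴ + ωζ² + (1/16)(3 − 2(1+k²) − (1−k²)²) with ω = (k² − 2)/2 (the quartic for the dnoidal solution, b = 1, for which c = 0). Then the image of the interval [(1−k')/2, (1+k')/2] under the map y ↦ 4·Q(iy) (which takes real values) is exactly the interval [0, 1−k²]. -/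
/-- For the dnoidal quartic (`b = 1`, `c = 0`, `ω = (k² − 2)/2`), the image
of `[(1−k')/2, (1+k')/2]` (with `k' = √(1−k²)`) under `y ↦ 4·Q(iy)` is exactly the real
interval `[0, 1−k²]` (in particular the map takes real values). -/
theorem dn_offaxis_spectrum_image
    (k : ℝ) (hk0 : 0 < k) (hk1 : k < 1)
    (k' : ℝ) (hk' : k' = Real.sqrt (1 - k ^ 2))
    (ω : ℝ) (hω : ω = (k ^ 2 - 2) / 2)
    (Q : ℂ → ℂ)
    (hQ : ∀ ζ : ℂ, Q ζ = -ζ ^ 4 + (ω : ℂ) * ζ ^ 2 +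
      (1 / 16) * ((3 - 2 * (1 + k ^ 2) - (1 - k ^ 2) ^ 2 : ℝ) : ℂ)) :
    (fun y : ℝ => 4 * Q (Complex.I * (y : ℂ))) '' Set.Icc ((1 - k') / 2) ((1 + k') / 2)
      = (fun r : ℝ => (r : ℂ)) '' Set.Icc (0 : ℝ) (1 - k ^ 2) := by
  have hk2 : (0:ℝ) < 1 - k ^ 2 := by nlinarith
  have hk'sq : k' ^ 2 = 1 - k ^ 2 := by rw [hk']; exact Real.sq_sqrt hk2.le
  have hk'pos : 0 < k' := by rw [hk']; exact Real.sqrt_pos.mpr hk2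
  have hk'lt : k' < 1 := by nlinarith
  set g : ℝ → ℝ := fun y => -4*y^4 + (4 - 2*k^2)*y^2 - k^4/4 with hg
  have hfun : (fun y : ℝ => 4 * Q (Complex.I * (y : ℂ))) = fun y : ℝ => ((g y : ℝ) : ℂ) := by
    funext y
    rw [hQ, hω, hg]
    have h2 : (Complex.I) ^ 2 = -1 := Complex.I_sq
    push_cast
    ring_nf
    simp only [show (Complex.I:ℂ)^4 = 1 by rw [show (4:ℕ) = 2*2 from rfl, pow_mul, Complex.I_sq]; ring, Complex.I_sq]
    ring
  rw [hfun]
  have himg : g '' Set.Icc ((1 - k') / 2) ((1 + k') / 2) = Set.Icc (0:ℝ) (1 - k ^ 2) := by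
    apply Set.Subset.antisymm
    · rintro _ ⟨y, ⟨hy1, hy2⟩, rfl⟩
      simp only [hg]
      constructor
      · -- g y ≥ 0
        have h1 : ((1 - k')/2)^2 ≤ y^2 := by nlinarith
        have h2 : y^2 ≤ ((1 + k')/2)^2 := by nlinarith
        nlinarith [mul_nonneg (sub_nonneg.mpr h1) (sub_nonneg.mpr h2)]
      · nlinarith [sq_nonneg (y^2 - (2 - k^2)/4)]
    · -- ⊇ via IVT
      set m : ℝ := Real.sqrt (2 - k^2) / 2 with hm
      have h2k : (0:ℝ) ≤ 2 - k^2 := by nlinarith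
      have hmsq : (Real.sqrt (2 - k^2))^2 = 2 - k^2 := Real.sq_sqrt h2k
      have hml : (1 - k')/2 ≤ m := by
        have : 1 - k' ≤ Real.sqrt (2 - k^2) := by
          nlinarith [Real.sqrt_nonneg (2 - k^2)]
        linarith [this]
      have hmr : m ≤ (1 + k')/2 := by
        have : Real.sqrt (2 - k^2) ≤ 1 + k' := by
          nlinarith [Real.sqrt_nonneg (2 - k^2)]
        linarith [this]
      have hga : g ((1 - k')/2) = 0 := by simp only [hg]; nlinarith
      have hgm : g m = 1 - k^2 := by simp only [hg, hm]; nlinarith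
      have hcont : ContinuousOn g (Set.Icc ((1 - k')/2) m) := by
        rw [hg]; fun_prop
      have := intermediate_value_Icc hml hcont
      rw [hga, hgm] at this
      intro r hr
      obtain ⟨y, hy, hgy⟩ := this hr
      exact ⟨y, ⟨hy.1, hy.2.trans hmr⟩, hgy⟩
  rw [show (fun y : ℝ => ((g y : ℝ) : ℂ)) = (fun r : ℝ => (r : ℂ)) ∘ g from rfl,
    Set.image_comp, himg]
end
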